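/- (Syzygy criterion.) Let s be a module term and let G be a Sig-Gröbner basis up to s. Suppose there exists a nonzero syzygy h ∈ P^m whose signature divides s, i.e. sig(h) = t·eᵢ and s = t′·eᵢ with t ∣ t′. Then every f ∈ P^m with sig(f) = s Sig-reduces to zero with respect to G: f →_{G,∗} h′ for some syzygy h′. -/

import Mathlib

open MvPolynomial

/-- A term (power product) identified with its exponent vector in `ℕⁿ`;
the product of terms corresponds tord addition of exponent vectors. -/
abbrev Term (n : ℕ) := Fin n →₀ ℕ

/-- A module term `t·eᵢ` identified with the pair `(t, i)`. -/
abbrev MTerm (n m : ℕ) := (Fin n →₀ ℕ) × Fin m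

/-- A monomial order on terms: a linear order with `1 ≤ t` for every term `t`,
compatible with term multiplication (= addition of exponent vectors). -/
structure TermOrder (n : ℕ) where
  le : Term n → Term n → Prop
  linear : IsLinearOrder (Term n) le
  bot : ∀ t : Term n, le 0 t
  add_le_add : ∀ u v w : Term n, le u v → le (w + u) (w + v)

/-- A compatible order extension `⪯` of a monomial order tord module terms:
a linear order whose strict part is well-founded, satisfying
(i) `u ≤ v → u·eᵢ ⪯ v·eᵢ` and (ii) `t·eᵢ ⪯ t′·eⱼ → (u·t)·eᵢ ⪯ (u·t′)·eⱼ`. -/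
structure ModOrder (n m : ℕ) (tord : TermOrder n) where
  le : MTerm n m → MTerm n m → Prop
  linear : IsLinearOrder (MTerm n m) le
  wf : WellFounded (fun a b : MTerm n m => le a b ∧ a ≠ b)
  compat : ∀ u v : Term n, tord.le u v → ∀ i : Fin m, le (u, i) (v, i)
  stable : ∀ (t t' : Term n) (i j : Fin m) (u : Term n),
      le (t, i) (t', j) → le (u + t, i) (u + t', j)

variable {F : Type*} [Field F] {n m : ℕ}

/-- `IsLT tord f t` : `t` is the leading term of the polynomial `f` w.r.t. `tord`. -/
def IsLT (tord : TermOrder n) (f : MvPolynomial (Fin n) F) (t : Term n) : Prop :=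
  t ∈ f.support ∧ ∀ u ∈ f.support, tord.le u t

/-- The module homomorphism `φ : P^m → P`, `(p₁,…,p_m) ↦ Σᵢ pᵢ·fᵢ`. -/
noncomputable def phi (fs : Fin m → MvPolynomial (Fin n) F)
    (f : Fin m → MvPolynomial (Fin n) F) : MvPolynomial (Fin n) F :=
  ∑ i, f i * fs i

/-- The set of module terms occurring in a module element with nonzero coefficient. -/
def msupport (f : Fin m → MvPolynomial (Fin n) F) : Set (MTerm n m) :=
  {σ | MvPolynomial.coeff σ.1 (f σ.2) ≠ 0}

/-- `IsSig mo f σ` : `σ` is the signature of `f`, i.e. the `⪯`-largest module term of `f`. -/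
def IsSig {tord : TermOrder n} (mo : ModOrder n m tord)
    (f : Fin m → MvPolynomial (Fin n) F) (σ : MTerm n m) : Prop :=
  σ ∈ msupport f ∧ ∀ τ ∈ msupport f, mo.le τ σ

/-- Multiplication of a module element by a term `u`. -/
noncomputable def tmul (u : Term n) (f : Fin m → MvPolynomial (Fin n) F) :
    Fin m → MvPolynomial (Fin n) F :=
  fun i => MvPolynomial.monomial u (1 : F) * f i

/-- The strict part `≺` of `⪯`. -/
def mlt {tord : TermOrder n} (mo : ModOrder n m tord) (a b : MTerm n m) : Prop :=
  mo.le a b ∧ a ≠ b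

/-- `σ ≺ s` where `s` is a module term or the formal symbol `∞ = ⊤`
(with `r ≺ ∞` for every module term `r`). -/
def ltE {tord : TermOrder n} (mo : ModOrder n m tord) (σ : MTerm n m)
    (s : WithTop (MTerm n m)) : Prop :=
  ∀ τ : MTerm n m, s = ↑τ → mlt mo σ τ

/-- `σ ⪯ s` where `s` is a module term or the formal symbol `∞ = ⊤`. -/
def leE {tord : TermOrder n} (mo : ModOrder n m tord) (σ : MTerm n m)
    (s : WithTop (MTerm n m)) : Prop :=
  ∀ τ : MTerm n m, s = ↑τ → mo.le σ τ

/-- A term `t` is Sig-reducible w.r.t. `G` up tord `s` if there are `g ∈ G` and a term `u`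
with `LT(φ(u·g)) = t` and `sig(u·g) ≺ s`. -/
def SigRedTerm (tord : TermOrder n) (mo : ModOrder n m tord)
    (fs : Fin m → MvPolynomial (Fin n) F)
    (G : Finset (Fin m → MvPolynomial (Fin n) F))
    (s : WithTop (MTerm n m)) (t : Term n) : Prop :=
  ∃ g ∈ G, ∃ (u : Term n) (σ : MTerm n m),
    IsLT tord (phi fs (tmul u g)) t ∧ IsSig mo (tmul u g) σ ∧ ltE mo σ s

/-- `h` is Sig-tail-irreducible w.r.t. `G` up tord `s` : no term of `Tail(φ(h))`
is Sig-reducible w.r.t. `G` up tord `s`. -/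
def SigTailIrred (tord : TermOrder n) (mo : ModOrder n m tord)
    (fs : Fin m → MvPolynomial (Fin n) F)
    (G : Finset (Fin m → MvPolynomial (Fin n) F))
    (h : Fin m → MvPolynomial (Fin n) F) (s : WithTop (MTerm n m)) : Prop :=
  ∀ lt : Term n, IsLT tord (phi fs h) lt →
    ∀ t ∈ (phi fs h).support, t ≠ lt → ¬ SigRedTerm tord mo fs G s t

/-- A Sig-reduction step on `f` w.r.t. `G` at the term `t ∈ T(φ(f))`, producing `f'`. -/
def SigRedStepAt (tord : TermOrder n) (mo : ModOrder n m tord)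
    (fs : Fin m → MvPolynomial (Fin n) F)
    (G : Finset (Fin m → MvPolynomial (Fin n) F))
    (t : Term n) (f f' : Fin m → MvPolynomial (Fin n) F) : Prop :=
  ∃ g ∈ G, ∃ (u lg : Term n) (σf σug : MTerm n m),
    t ∈ (phi fs f).support ∧ IsLT tord (phi fs g) lg ∧ t = u + lg ∧
    IsSig mo f σf ∧ IsSig mo (tmul u g) σug ∧ mo.le σug σf ∧
    f' = f - (MvPolynomial.coeff t (phi fs f) / MvPolynomial.coeff lg (phi fs g)) • tmul u g

/-- A regular Sig-reduction step at `t` : additionally `sig(u·g) ≺ sig(f)`. -/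
def RegSigRedStepAt (tord : TermOrder n) (mo : ModOrder n m tord)
    (fs : Fin m → MvPolynomial (Fin n) F)
    (G : Finset (Fin m → MvPolynomial (Fin n) F))
    (t : Term n) (f f' : Fin m → MvPolynomial (Fin n) F) : Prop :=
  ∃ g ∈ G, ∃ (u lg : Term n) (σf σug : MTerm n m),
    t ∈ (phi fs f).support ∧ IsLT tord (phi fs g) lg ∧ t = u + lg ∧
    IsSig mo f σf ∧ IsSig mo (tmul u g) σug ∧ mlt mo σug σf ∧
    f' = f - (MvPolynomial.coeff t (phi fs f) / MvPolynomial.coeff lg (phi fs g)) • tmul u g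

/-- A Sig-reduction step on `f` w.r.t. `G`. -/
def SigRedStep (tord : TermOrder n) (mo : ModOrder n m tord)
    (fs : Fin m → MvPolynomial (Fin n) F)
    (G : Finset (Fin m → MvPolynomial (Fin n) F))
    (f f' : Fin m → MvPolynomial (Fin n) F) : Prop :=
  ∃ t : Term n, SigRedStepAt tord mo fs G t f f'

/-- A regular Sig-reduction step on `f` w.r.t. `G`. -/
def RegSigRedStep (tord : TermOrder n) (mo : ModOrder n m tord)
    (fs : Fin m → MvPolynomial (Fin n) F)
    (G : Finset (Fin m → MvPolynomial (Fin n) F))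
    (f f' : Fin m → MvPolynomial (Fin n) F) : Prop :=
  ∃ t : Term n, RegSigRedStepAt tord mo fs G t f f'

/-- `f` Sig-reduces tord zero w.r.t. `G` : `f →_{G,∗} h` for some syzygy `h`. -/
def SigReducesToZero (tord : TermOrder n) (mo : ModOrder n m tord)
    (fs : Fin m → MvPolynomial (Fin n) F)
    (G : Finset (Fin m → MvPolynomial (Fin n) F))
    (f : Fin m → MvPolynomial (Fin n) F) : Prop :=
  ∃ h, Relation.ReflTransGen (SigRedStep tord mo fs G) f h ∧ phi fs h = 0

/-- `G` is a Sig-Gröbner basis up tord the module term `s` :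
every nonzero `f` with `sig(f) ≺ s` Sig-reduces tord zero w.r.t. `G`. -/
def SigGBUpTo (tord : TermOrder n) (mo : ModOrder n m tord)
    (fs : Fin m → MvPolynomial (Fin n) F)
    (G : Finset (Fin m → MvPolynomial (Fin n) F)) (s : MTerm n m) : Prop :=
  ∀ f σ, f ≠ 0 → IsSig mo f σ → mlt mo σ s → SigReducesToZero tord mo fs G f

/-- `q` is a regular Sig-normal form of `p` w.r.t. `G`. -/
def RegNF (tord : TermOrder n) (mo : ModOrder n m tord)
    (fs : Fin m → MvPolynomial (Fin n) F)
    (G : Finset (Fin m → MvPolynomial (Fin n) F))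
    (p q : Fin m → MvPolynomial (Fin n) F) : Prop :=
  Relation.ReflTransGen (RegSigRedStep tord mo fs G) p q ∧
    ∀ q', ¬ RegSigRedStep tord mo fs G q q'

/-- `h` is singularly Sig-top-reducible w.r.t. `G` : a singular Sig-top-reduction step
applies tord `h`. -/
def SingTopReducible (tord : TermOrder n) (mo : ModOrder n m tord)
    (fs : Fin m → MvPolynomial (Fin n) F)
    (G : Finset (Fin m → MvPolynomial (Fin n) F))
    (h : Fin m → MvPolynomial (Fin n) F) : Prop :=
  ∃ t : Term n, IsLT tord (phi fs h) t ∧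
    ∃ g ∈ G, ∃ (u lg : Term n) (σh σug : MTerm n m),
      IsLT tord (phi fs g) lg ∧ t = u + lg ∧
      IsSig mo h σh ∧ IsSig mo (tmul u g) σug ∧ σug = σh

/-- The least common multiple of two terms: the pointwise maximum of exponent vectors. -/
noncomputable def lcmTerm (a b : Term n) : Term n := Finsupp.zipWith max (max_self 0) a b

/-- `p` is the S-pair of `f` and `g` and this S-pair is regular. -/
def IsRegSpair (tord : TermOrder n) (mo : ModOrder n m tord)
    (fs : Fin m → MvPolynomial (Fin n) F)
    (f g p : Fin m → MvPolynomial (Fin n) F) : Prop :=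
  ∃ lf lg : Term n, IsLT tord (phi fs f) lf ∧ IsLT tord (phi fs g) lg ∧
    (∀ σ₁ σ₂ : MTerm n m, IsSig mo (tmul (lcmTerm lf lg - lf) f) σ₁ →
      IsSig mo (tmul (lcmTerm lf lg - lg) g) σ₂ → σ₁ ≠ σ₂) ∧
    p = (MvPolynomial.coeff lf (phi fs f))⁻¹ • tmul (lcmTerm lf lg - lf) f
      - (MvPolynomial.coeff lg (phi fs g))⁻¹ • tmul (lcmTerm lf lg - lg) g

/-- `T_G(f)` : the set of terms of `f` that are reducible w.r.t. the set `G`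
of nonzero polynomials. -/
def TRed (tord : TermOrder n) (G : Finset (MvPolynomial (Fin n) F))
    (f : MvPolynomial (Fin n) F) : Set (Term n) :=
  {t | t ∈ f.support ∧ ∃ g ∈ G, ∃ lg u : Term n, IsLT tord g lg ∧ t = u + lg}

/-- An ordinary reduction step on a polynomial `p` w.r.t. the polynomials `φ(g)`, `g ∈ G`. -/
noncomputable def OrdRedStep (tord : TermOrder n)
    (fs : Fin m → MvPolynomial (Fin n) F)
    (G : Finset (Fin m → MvPolynomial (Fin n) F))
    (p p' : MvPolynomial (Fin n) F) : Prop :=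
  ∃ g ∈ G, ∃ (u lg : Term n),
    IsLT tord (phi fs g) lg ∧ (u + lg) ∈ p.support ∧
    p' = p - (MvPolynomial.coeff (u + lg) p / MvPolynomial.coeff lg (phi fs g)) •
      (MvPolynomial.monomial u (1 : F) * phi fs g)

section Aux6

variable {F : Type*} [Field F] {n m : ℕ}

lemma phi_add' (fs f g : Fin m → MvPolynomial (Fin n) F) :
    phi fs (f + g) = phi fs f + phi fs g := by
  simp [phi, add_mul, Finset.sum_add_distrib]

lemma phi_sub' (fs f g : Fin m → MvPolynomial (Fin n) F) :
    phi fs (f - g) = phi fs f - phi fs g := by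
  simp [phi, sub_mul, Finset.sum_sub_distrib]

lemma phi_smul' (fs : Fin m → MvPolynomial (Fin n) F) (c : F)
    (f : Fin m → MvPolynomial (Fin n) F) : phi fs (c • f) = c • phi fs f := by
  simp [phi, Finset.smul_sum, smul_mul_assoc]

lemma phi_tmul' (fs : Fin m → MvPolynomial (Fin n) F) (u : Term n)
    (g : Fin m → MvPolynomial (Fin n) F) :
    phi fs (tmul u g) = MvPolynomial.monomial u (1 : F) * phi fs g := by
  simp [phi, tmul, Finset.mul_sum, mul_assoc]

lemma phi_zero' (fs : Fin m → MvPolynomial (Fin n) F) :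
    phi fs (0 : Fin m → MvPolynomial (Fin n) F) = 0 := by
  simp [phi]

lemma exists_rel_max {α : Type*} (r : α → α → Prop) (htot : ∀ a b, r a b ∨ r b a)
    (htr : ∀ a b c, r a b → r b c → r a c) (S : Finset α) (hS : S.Nonempty) :
    ∃ b ∈ S, ∀ a ∈ S, r a b := by
  classical
  induction S using Finset.induction_on with
  | empty => exact absurd hS (by simp)
  | insert x S hx ih =>
    rcases S.eq_empty_or_nonempty with rfl | hS'
    · refine ⟨x, by simp, ?_⟩
      intro a ha
      simp only [Finset.mem_insert, Finset.notMem_empty, or_false] at ha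
      subst ha
      rcases htot a a with h | h <;> exact h
    · obtain ⟨b, hb, hmax⟩ := ih hS'
      rcases htot x b with hxb | hbx
      · refine ⟨b, Finset.mem_insert_of_mem hb, ?_⟩
        intro a ha
        rcases Finset.mem_insert.1 ha with rfl | ha
        · exact hxb
        · exact hmax a ha
      · refine ⟨x, Finset.mem_insert_self _ _, ?_⟩
        intro a ha
        rcases Finset.mem_insert.1 ha with rfl | ha
        · rcases htot a a with h | h <;> exact h
        · exact htr a b x (hmax a ha) hbx

lemma exists_isSig {tord : TermOrder n} (mo : ModOrder n m tord)
    (p : Fin m → MvPolynomial (Fin n) F) (hp : p ≠ 0) : ∃ σ, IsSig mo p σ := by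
  classical
  set S : Finset (MTerm n m) :=
    Finset.univ.biUnion (fun j => (p j).support.image (fun a => (a, j))) with hS
  have hmem : ∀ σ : MTerm n m, σ ∈ S ↔ σ ∈ msupport p := by
    intro σ
    simp only [hS, Finset.mem_biUnion, Finset.mem_univ, true_and, Finset.mem_image,
      MvPolynomial.mem_support_iff, msupport, Set.mem_setOf_eq]
    constructor
    · rintro ⟨j, a, ha, rfl⟩; exact ha
    · intro hσ; exact ⟨σ.2, σ.1, hσ, rfl⟩
  have hne : S.Nonempty := by
    obtain ⟨j, hj⟩ := Function.ne_iff.1 hp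
    obtain ⟨a, ha⟩ := MvPolynomial.support_nonempty.2 hj
    exact ⟨(a, j), (hmem _).2 (by simpa [msupport] using MvPolynomial.mem_support_iff.1 ha)⟩
  haveI := mo.linear
  obtain ⟨b, hb, hmax⟩ := exists_rel_max mo.le (fun a b => Std.Total.total a b)
    (fun a b c hab hbc => IsTrans.trans a b c hab hbc) S hne
  exact ⟨b, (hmem b).1 hb, fun τ hτ => hmax τ ((hmem τ).2 hτ)⟩

end Aux6

/-- Syzygy criterion. If `G` is a Sig-Gröbner basis up to `s` and
there is a nonzero syzygy `h` whose signature divides `s`, then every `f` with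
`sig(f) = s` Sig-reduces to zero w.r.t. `G`. -/
theorem statement6 {F : Type*} [Field F] {n m : ℕ} (hn : 0 < n) (hm : 0 < m)
    (tord : TermOrder n) (mo : ModOrder n m tord)
    (fs : Fin m → MvPolynomial (Fin n) F) (hfs : ∀ i, fs i ≠ 0)
    (G : Finset (Fin m → MvPolynomial (Fin n) F))
    (hG0 : ∀ g ∈ G, g ≠ 0) (hGphi : ∀ g ∈ G, phi fs g ≠ 0)
    (s : MTerm n m) (hGB : SigGBUpTo tord mo fs G s)
    (h : Fin m → MvPolynomial (Fin n) F) (hh : h ≠ 0) (hsyz : phi fs h = 0)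
    (t t' : Term n) (i : Fin m)
    (hsig : IsSig mo h (t, i)) (hs : s = (t', i)) (hdvd : ∃ w : Term n, t' = w + t) :
    ∀ f : Fin m → MvPolynomial (Fin n) F, IsSig mo f s →
      SigReducesToZero tord mo fs G f := by
  classical
  haveI := mo.linear
  obtain ⟨w, rfl⟩ := hdvd
  subst hs
  intro f hf
  -- basic order facts
  have le_trans' : ∀ a b c : MTerm n m, mo.le a b → mo.le b c → mo.le a c :=
    fun a b c hab hbc => IsTrans.trans a b c hab hbc
  have antisymm' : ∀ a b : MTerm n m, mo.le a b → mo.le b a → a = b :=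
    fun a b hab hba => Std.Antisymm.antisymm a b hab hba
  have le_lt : ∀ a b c : MTerm n m, mo.le a b → mlt mo b c → mlt mo a c := by
    rintro a b c hab ⟨hbc, hne⟩
    refine ⟨le_trans' _ _ _ hab hbc, fun heq => ?_⟩
    subst heq
    exact hne (antisymm' _ _ hbc hab)
  -- the syzygy multiple H
  have hchT : MvPolynomial.coeff t (h i) ≠ 0 := hsig.1
  have hcf : MvPolynomial.coeff (w + t) (f i) ≠ 0 := hf.1
  set c : F := MvPolynomial.coeff (w + t) (f i) / MvPolynomial.coeff t (h i) with hc
  have hcne : c ≠ 0 := div_ne_zero hcf hchT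
  set H : Fin m → MvPolynomial (Fin n) F := c • tmul w h with hHdef
  have hHapp : ∀ j, H j = c • (MvPolynomial.monomial w (1 : F) * h j) := by
    intro j; rw [hHdef]; rfl
  have hHcoeff : ∀ (v : Term n) (j : Fin m),
      MvPolynomial.coeff v (H j) = c * MvPolynomial.coeff v (MvPolynomial.monomial w (1 : F) * h j) := by
    intro v j; rw [hHapp, MvPolynomial.coeff_smul, smul_eq_mul]
  have hHi : MvPolynomial.coeff (w + t) (H i) = c * MvPolynomial.coeff t (h i) := by
    rw [hHcoeff, MvPolynomial.coeff_monomial_mul, one_mul]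
  have hHs : MvPolynomial.coeff (w + t) (H i) ≠ 0 := by
    rw [hHi]; exact mul_ne_zero hcne hchT
  have hHphi : phi fs H = 0 := by
    rw [hHdef, phi_smul', phi_tmul', hsyz, mul_zero, smul_zero]
  have hHle : ∀ τ ∈ msupport H, mo.le τ (w + t, i) := by
    rintro ⟨v, j⟩ hτ
    have hv : MvPolynomial.coeff v (MvPolynomial.monomial w (1 : F) * h j) ≠ 0 := by
      intro h0
      exact hτ (by rw [show MvPolynomial.coeff ((v, j) : MTerm n m).1 (H ((v, j) : MTerm n m).2)
        = MvPolynomial.coeff v (H j) from rfl, hHcoeff, h0, mul_zero])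
    rw [MvPolynomial.coeff_monomial_mul'] at hv
    by_cases hle : w ≤ v
    · rw [if_pos hle, one_mul] at hv
      have hmem : ((v - w, j) : MTerm n m) ∈ msupport h := hv
      have h1 := mo.stable (v - w) t j i w (hsig.2 _ hmem)
      rwa [add_tsub_cancel_of_le hle] at h1
    · rw [if_neg hle] at hv; exact absurd rfl hv
  -- the invariant
  set I : (Fin m → MvPolynomial (Fin n) F) → Prop :=
    fun p => ∀ τ ∈ msupport p, mlt mo τ ((w + t, i) : MTerm n m) with hIdef
  have coeff_s_zero : ∀ p, I p → MvPolynomial.coeff (w + t) (p i) = 0 := by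
    intro p hIp
    by_contra h0
    exact (hIp ((w + t,  i) : MTerm n m) h0).2 rfl
  have hsig_add : ∀ p, I p → IsSig mo (p + H) ((w + t, i) : MTerm n m) := by
    intro p hIp
    constructor
    · show MvPolynomial.coeff (w + t) ((p + H) i) ≠ 0
      rw [Pi.add_apply, MvPolynomial.coeff_add, coeff_s_zero p hIp, zero_add]
      exact hHs
    · rintro τ hτ
      have : MvPolynomial.coeff τ.1 (p τ.2) ≠ 0 ∨ MvPolynomial.coeff τ.1 (H τ.2) ≠ 0 := by
        by_contra hcon
        push_neg at hcon
        exact hτ (by rw [show MvPolynomial.coeff τ.1 ((p + H) τ.2)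
          = MvPolynomial.coeff τ.1 (p τ.2) + MvPolynomial.coeff τ.1 (H τ.2) from
            by rw [Pi.add_apply, MvPolynomial.coeff_add], hcon.1, hcon.2, add_zero])
      rcases this with h1 | h2
      · exact (hIp τ h1).1
      · exact hHle τ h2
  -- step preservation and lifting
  have step_pres : ∀ p p', SigRedStep tord mo fs G p p' → I p → I p' := by
    rintro p p' ⟨tt, g, hg, u, lg, σf, σug, htt, hlg, httu, hsf, hsug, hlee, rfl⟩ hIp τ hτ
    have : MvPolynomial.coeff τ.1 (p τ.2) ≠ 0 ∨
        MvPolynomial.coeff τ.1 ((tmul u g) τ.2) ≠ 0 := by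
      by_contra hcon
      push_neg at hcon
      refine hτ ?_
      rw [show MvPolynomial.coeff τ.1
        ((p - (MvPolynomial.coeff tt (phi fs p) / MvPolynomial.coeff lg (phi fs g)) • tmul u g) τ.2)
        = MvPolynomial.coeff τ.1 (p τ.2)
          - (MvPolynomial.coeff tt (phi fs p) / MvPolynomial.coeff lg (phi fs g))
            * MvPolynomial.coeff τ.1 ((tmul u g) τ.2) from by
          rw [Pi.sub_apply, MvPolynomial.coeff_sub, Pi.smul_apply, MvPolynomial.coeff_smul,
            smul_eq_mul], hcon.1, hcon.2, mul_zero, sub_zero]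
    rcases this with h1 | h2
    · exact hIp τ h1
    · have hτug : mo.le τ σug := hsug.2 τ h2
      have hσfs : mlt mo σf ((w + t, i) : MTerm n m) := hIp σf hsf.1
      exact le_lt _ _ _ (le_trans' _ _ _ hτug hlee) hσfs
  have lift_step : ∀ p p', SigRedStep tord mo fs G p p' → I p →
      SigRedStep tord mo fs G (p + H) (p' + H) := by
    rintro p p' ⟨tt, g, hg, u, lg, σf, σug, htt, hlg, httu, hsf, hsug, hlee, rfl⟩ hIp
    have hphiPH : phi fs (p + H) = phi fs p := by rw [phi_add', hHphi, add_zero]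
    refine ⟨tt, g, hg, u, lg, ((w + t, i) : MTerm n m), σug, ?_, hlg, httu,
      hsig_add p hIp, hsug, ?_, ?_⟩
    · rw [hphiPH]; exact htt
    · exact le_trans' _ _ _ hlee (hIp σf hsf.1).1
    · rw [hphiPH]; abel
  -- lifting chains
  have chain_lift : ∀ p hend, Relation.ReflTransGen (SigRedStep tord mo fs G) p hend → I p →
      Relation.ReflTransGen (SigRedStep tord mo fs G) (p + H) (hend + H) := by
    intro p hend hrt
    induction hrt using Relation.ReflTransGen.head_induction_on with
    | refl => intro _; exact Relation.ReflTransGen.refl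
    | head hstep hrt' ih =>
      intro hIp
      exact (ih (step_pres _ _ hstep hIp)).head (lift_step _ _ hstep hIp)
  -- the element p = f - H
  set p : Fin m → MvPolynomial (Fin n) F := f - H with hpdef
  have hpi : MvPolynomial.coeff (w + t) (p i) = 0 := by
    rw [hpdef, Pi.sub_apply, MvPolynomial.coeff_sub, hHi, hc,
      div_mul_cancel₀ _ hchT, sub_self]
  have hIp : I p := by
    rintro τ hτ
    have hle : mo.le τ ((w + t, i) : MTerm n m) := by
      have : MvPolynomial.coeff τ.1 (f τ.2) ≠ 0 ∨ MvPolynomial.coeff τ.1 (H τ.2) ≠ 0 := by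
        by_contra hcon
        push_neg at hcon
        exact hτ (by rw [show MvPolynomial.coeff τ.1 (p τ.2)
          = MvPolynomial.coeff τ.1 (f τ.2) - MvPolynomial.coeff τ.1 (H τ.2) from by
            rw [hpdef, Pi.sub_apply, MvPolynomial.coeff_sub], hcon.1, hcon.2, sub_zero])
      rcases this with h1 | h2
      · exact hf.2 τ h1
      · exact hHle τ h2
    refine ⟨hle, ?_⟩
    rintro rfl
    exact hτ hpi
  have hpf : p + H = f := by rw [hpdef]; abel
  by_cases hphif : phi fs f = 0
  · exact ⟨f, Relation.ReflTransGen.refl, hphif⟩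
  · have hpphi : phi fs p = phi fs f := by rw [hpdef, phi_sub', hHphi, sub_zero]
    have hpne : p ≠ 0 := by
      intro h0
      exact hphif (by rw [← hpphi, h0, phi_zero'])
    obtain ⟨σp, hσp⟩ := exists_isSig mo p hpne
    obtain ⟨hend, hrt, hend0⟩ := hGB p σp hpne hσp (hIp σp hσp.1)
    refine ⟨hend + H, ?_, ?_⟩
    · rw [← hpf]; exact chain_lift p hend hrt hIp
    · rw [phi_add', hend0, hHphi, add_zero]
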